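/- arXiv:2302.06377 — 3 statements merged into one kernel-verified Lean document; each statement's English description precedes it below -/
import Mathlib

section
/- Let z ∈ ℂ and x ∈ ℝ with |z|² + x² = 1 and Re(z) > -1. Define a = √((√((Re(z)+1)/2) + 1)/2), b = Im(z) / (2√((Re(z)+1)(√((Re(z)+1)/2)+1))), c = x / (2√((Re(z)+1)(√((Re(z)+1)/2)+1))), and set α = a + b·i, β = c. Then |α|² + |β|² = 1, α² - β² = √((Re(z)+1)/2) + i·Im(z)/√(2(Re(z)+1)), and 2·Re(ᾱβ) = x/√(2(Re(z)+1)). -/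
/-!
Put `r = Re z + 1` and `s = √(r/2)`, so that `r = 2s²` and `a² = (s+1)/2`. The normalisation
`|z|² + x² = 1` reads `Im(z)² + x² = r(2 - r)`, whence `b² + c² = (1 - s)/2`; therefore
`a² + b² + c² = 1` and `a² - b² - c² = s`. The common denominator of `b` and `c` factors as
`√(r(s+1)) = √(2r) · a`, which turns `2ab` and `2ac` into `Im(z)/√(2r)` and `x/√(2r)`.
-/

namespace Complex

lemma normSq_add_mul_I_add_normSq_ofReal (a b c : ℝ) :
    normSq (a + b * I) + normSq (c : ℂ) = a ^ 2 + b ^ 2 + c ^ 2 := by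
  rw [normSq_add_mul_I, normSq_ofReal]
  ring

lemma add_mul_I_sq_sub_ofReal_sq (a b c : ℝ) :
    (a + b * I) ^ 2 - (c : ℂ) ^ 2 =
      ((a ^ 2 - b ^ 2 - c ^ 2 : ℝ) : ℂ) + ((2 * a * b : ℝ) : ℂ) * I := by
  push_cast
  linear_combination b ^ 2 * I_sq

lemma re_conj_add_mul_I_mul_ofReal (a b c : ℝ) :
    (starRingEnd ℂ (a + b * I) * c).re = a * c := by
  simp

end Complex

lemma Real.sqrt_mul_eq_sqrt_two_mul_mul_sqrt_div_two {r t : ℝ} (hr : 0 ≤ r) :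
    √(r * t) = √(2 * r) * √(t / 2) := by
  rw [← Real.sqrt_mul (by positivity)]
  ring_nf

lemma two_mul_mul_div_two_mul_mul {K : Type*} [Field K] [NeZero (2 : K)] {a p y : K}
    (ha : a ≠ 0) : 2 * a * (y / (2 * (p * a))) = y / p := by
  rcases eq_or_ne p 0 with rfl | hp
  · simp
  · field_simp

lemma sq_div_two_mul_add_sq_div_two_mul {r s q y x : ℝ} (hr : 0 < r) (hs : 0 ≤ s)
    (hrs : r = 2 * s ^ 2) (hq : q ^ 2 = r * (s + 1)) (hyx : y ^ 2 + x ^ 2 = r * (2 - r)) :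
    (y / (2 * q)) ^ 2 + (x / (2 * q)) ^ 2 = (1 - s) / 2 := by
  rw [div_pow, div_pow, ← add_div, hyx, mul_pow, hq]
  field_simp
  rw [hrs]
  ring

open Complex

theorem explicit_su2_params (z : ℂ) (x : ℝ)
    (h : Complex.normSq z + x ^ 2 = 1) (hz : z.re > -1) :
    let a : ℝ := Real.sqrt ((Real.sqrt ((z.re + 1) / 2) + 1) / 2)
    let b : ℝ := z.im /
      (2 * Real.sqrt ((z.re + 1) * (Real.sqrt ((z.re + 1) / 2) + 1)))
    let c : ℝ := x /
      (2 * Real.sqrt ((z.re + 1) * (Real.sqrt ((z.re + 1) / 2) + 1)))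
    let α : ℂ := (a : ℂ) + (b : ℂ) * Complex.I
    let β : ℂ := (c : ℂ)
    Complex.normSq α + Complex.normSq β = 1 ∧
      α ^ 2 - β ^ 2 = (Real.sqrt ((z.re + 1) / 2) : ℂ) +
        (z.im / Real.sqrt (2 * (z.re + 1)) : ℝ) * Complex.I ∧
      2 * ((starRingEnd ℂ) α * β).re = x / Real.sqrt (2 * (z.re + 1)) := by
  intro a b c α β
  have hr : 0 < z.re + 1 := by linarith
  have hyx : z.im ^ 2 + x ^ 2 = (z.re + 1) * (2 - (z.re + 1)) := by
    rw [normSq_apply] at h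
    linear_combination h
  set s := √((z.re + 1) / 2)
  have hs : 0 ≤ s := Real.sqrt_nonneg _
  have hrs : z.re + 1 = 2 * s ^ 2 := by
    rw [Real.sq_sqrt (by positivity)]
    ring
  have ha : 0 < a := Real.sqrt_pos.2 (by positivity)
  have ha2 : a ^ 2 = (s + 1) / 2 := Real.sq_sqrt (by positivity)
  have hq : √((z.re + 1) * (s + 1)) = √(2 * (z.re + 1)) * a :=
    Real.sqrt_mul_eq_sqrt_two_mul_mul_sqrt_div_two hr.le
  have hbc : b ^ 2 + c ^ 2 = (1 - s) / 2 :=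
    sq_div_two_mul_add_sq_div_two_mul hr hs hrs (Real.sq_sqrt (by positivity)) hyx
  have hab : 2 * a * b = z.im / √(2 * (z.re + 1)) := by
    simp only [b]
    rw [hq]
    exact two_mul_mul_div_two_mul_mul ha.ne'
  have hac : 2 * a * c = x / √(2 * (z.re + 1)) := by
    simp only [c]
    rw [hq]
    exact two_mul_mul_div_two_mul_mul ha.ne'
  refine ⟨?_, ?_, ?_⟩
  · rw [normSq_add_mul_I_add_normSq_ofReal]
    linarith
  · rw [add_mul_I_sq_sub_ofReal_sq, hab, show a ^ 2 - b ^ 2 - c ^ 2 = s by linarith]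
  · rw [re_conj_add_mul_I_mul_ofReal, ← mul_assoc, hac]
end

section
/- Every SU(2) matrix V with real off-diagonal entries, i.e. V = [[z̄, x],[-x, z]] with x ∈ ℝ, |z|² + x² = 1, and Re(z) > -1, can be written as V = (A† · σₓ · A · σₓ)² for some A ∈ SU(2). -/
/-!
Write `M = realOffDiag w t = [[w̄, t], [-t, w]]` with `t` real. These matrices are closed under
squaring, `realOffDiag w t ^ 2 = realOffDiag (w² - t²) (2 t Re w)`, and on the sphere
`|w|² + t² = 1` the half-angle formulas invert this squaring whenever `Re w > -1`, giving a square
root with `Re w > 0`. Moreover `σₓ Mᴴ σₓ = M`, so `A := Mᴴ` gives `A† σₓ A σₓ = M²`. Taking a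
square root of `V` twice yields `M` with `V = (M²)²`.
-/

open Matrix Complex

def realOffDiag (w : ℂ) (t : ℝ) : Matrix (Fin 2) (Fin 2) ℂ :=
  !![starRingEnd ℂ w, (t : ℂ); -(t : ℂ), w]

theorem realOffDiag_sq (w : ℂ) (t : ℝ) :
    realOffDiag w t ^ 2 = realOffDiag (w ^ 2 - t ^ 2) (2 * t * w.re) := by
  rw [sq]
  ext i j
  fin_cases i <;> fin_cases j <;>
    simp [realOffDiag, Matrix.mul_apply, Complex.ext_iff, pow_two] <;> grind

theorem exists_realOffDiag_sq_eq {w : ℂ} {t : ℝ} (h : normSq w + t ^ 2 = 1)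
    (hw : -1 < w.re) :
    ∃ (u : ℂ) (s : ℝ), normSq u + s ^ 2 = 1 ∧ 0 < u.re ∧
      realOffDiag u s ^ 2 = realOffDiag w t := by
  obtain ⟨a, ha, ha2⟩ : ∃ a : ℝ, 0 < a ∧ 2 * a ^ 2 = 1 + w.re :=
    ⟨√((1 + w.re) / 2), Real.sqrt_pos.mpr (by linarith),
      by rw [Real.sq_sqrt (by linarith)]; ring⟩
  rw [normSq_apply] at h
  refine ⟨⟨a, w.im / (2 * a)⟩, t / (2 * a), ?_, ha, ?_⟩
  · rw [normSq_apply]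
    field_simp
    linear_combination h + (2 * a ^ 2 - 1 + w.re) * ha2
  · rw [realOffDiag_sq]
    congr 1
    · apply Complex.ext <;>
        simp only [sub_re, sub_im, pow_two, mul_re, mul_im, ofReal_re, ofReal_im] <;>
        field_simp
      · linear_combination (2 * a ^ 2 - w.re + 1) * ha2 - h
      · ring
    · field_simp

theorem pauliX_mul_conjTranspose_realOffDiag_mul_pauliX (w : ℂ) (t : ℝ) :
    !![0, 1; 1, 0] * ((realOffDiag w t)ᴴ * !![0, 1; 1, 0]) = realOffDiag w t := by
  ext i j
  fin_cases i <;> fin_cases j <;>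
    simp [realOffDiag, Matrix.mul_apply, Fin.sum_univ_two]

theorem conjTranspose_realOffDiag (w : ℂ) (t : ℝ) :
    (realOffDiag w t)ᴴ = !![w, -(starRingEnd ℂ) (t : ℂ); (t : ℂ), starRingEnd ℂ w] := by
  ext i j
  fin_cases i <;> fin_cases j <;> simp [realOffDiag]

theorem real_offdiag_su2_realizable (z : ℂ) (x : ℝ)
    (h : Complex.normSq z + x ^ 2 = 1) (hz : z.re > -1) :
    ∃ α β : ℂ, Complex.normSq α + Complex.normSq β = 1 ∧
      (let A : Matrix (Fin 2) (Fin 2) ℂ :=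
        !![α, -(starRingEnd ℂ) β; β, (starRingEnd ℂ) α]
       let X : Matrix (Fin 2) (Fin 2) ℂ := !![0, 1; 1, 0]
       !![(starRingEnd ℂ) z, (x : ℂ); -(x : ℂ), z] = (Aᴴ * X * A * X) ^ 2) := by
  obtain ⟨w, t, hwt, hw, hsq⟩ := exists_realOffDiag_sq_eq h hz
  obtain ⟨u, s, hus, -, hsq'⟩ := exists_realOffDiag_sq_eq hwt (by linarith)
  refine ⟨u, s, by rwa [normSq_ofReal, ← sq], ?_⟩
  change realOffDiag z x = _
  rw [← conjTranspose_realOffDiag, conjTranspose_conjTranspose, Matrix.mul_assoc,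
    Matrix.mul_assoc, pauliX_mul_conjTranspose_realOffDiag_mul_pauliX, ← sq, hsq', hsq]
end

section
/- Let W ∈ SU(2). Then there exist matrices A, B, C ∈ SU(2) such that A·B·C = I and W = A·σₓ·B·σₓ·C. -/
/-!
Every `W ∈ SU(2)` has an Euler decomposition `W = R_z(a) R_y(b) R_z(c)`: its first column is
`(cos (b/2) e^{-i(a+c)/2}, sin (b/2) e^{i(a-c)/2})`, so `b/2 = arccos |W₀₀|` and the arguments of
`W₀₀`, `W₁₀` determine `a + c` and `a - c`. With `A = R_z(a) R_y(b/2)`,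
`B = R_y(-b/2) R_z(-(a+c)/2)`, `C = R_z((c-a)/2)` the product `ABC` telescopes to `1`, while
conjugation by `σₓ` negates the angles of `R_y` and `R_z`, turning `AσₓBσₓC` back into `W`.
-/

open Matrix Complex

namespace Matrix

variable {R : Type*} [CommRing R] [StarRing R]

lemma of_mem_specialUnitaryGroup_fin_two_iff {a b c d : R} :
    !![a, b; c, d] ∈ specialUnitaryGroup (Fin 2) R ↔
      d = star a ∧ b = -star c ∧ star a * a + star c * c = 1 := by
  trans ((star a * a + star c * c = 1 ∧ star a * b + star c * d = 0) ∧
    star b * a + star d * c = 0 ∧ star b * b + star d * d = 1) ∧ a * d - b * c = 1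
  · simp [mem_specialUnitaryGroup_iff, mem_unitaryGroup_iff', ← Matrix.ext_iff,
      Fin.forall_fin_succ, star_eq_conjTranspose, mul_apply]
  constructor
  · rintro ⟨⟨⟨h00, h01⟩, -⟩, hdet⟩
    refine ⟨?_, ?_, h00⟩
    · linear_combination -d * h00 + c * h01 + star a * hdet
    · linear_combination -b * h00 + a * h01 - star c * hdet
  · rintro ⟨rfl, rfl, h⟩
    simp only [star_neg, star_star]
    exact ⟨⟨⟨h, by ring⟩, by ring, by linear_combination h⟩, by linear_combination h⟩

lemma mem_specialUnitaryGroup_fin_two_iff {M : Matrix (Fin 2) (Fin 2) R} :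
    M ∈ specialUnitaryGroup (Fin 2) R ↔
      M 1 1 = star (M 0 0) ∧ M 0 1 = -star (M 1 0) ∧
        star (M 0 0) * M 0 0 + star (M 1 0) * M 1 0 = 1 := by
  rw [← M.etaExpand_eq]
  exact of_mem_specialUnitaryGroup_fin_two_iff

lemma specialUnitaryGroup_fin_two_ext {U V : Matrix (Fin 2) (Fin 2) R}
    (hU : U ∈ specialUnitaryGroup (Fin 2) R) (hV : V ∈ specialUnitaryGroup (Fin 2) R)
    (h₀ : U 0 0 = V 0 0) (h₁ : U 1 0 = V 1 0) : U = V := by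
  rw [mem_specialUnitaryGroup_fin_two_iff] at hU hV
  ext i j
  fin_cases i <;> fin_cases j <;> simp [hU.1, hU.2.1, hV.1, hV.2.1, h₀, h₁]

end Matrix

lemma Complex.star_exp_ofReal_mul_I (x : ℝ) : star (exp (x * I)) = exp (-x * I) := by
  rw [star_def, ← Complex.exp_conj]
  simp

noncomputable def rotZ (θ : ℝ) : Matrix (Fin 2) (Fin 2) ℂ :=
  !![exp (-(θ / 2 : ℝ) * I), 0; 0, exp ((θ / 2 : ℝ) * I)]

noncomputable def rotY (θ : ℝ) : Matrix (Fin 2) (Fin 2) ℂ :=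
  !![(Real.cos (θ / 2) : ℂ), -(Real.sin (θ / 2) : ℂ);
     (Real.sin (θ / 2) : ℂ), (Real.cos (θ / 2) : ℂ)]

notation "σₓ" => (!![0, 1; 1, 0] : Matrix (Fin 2) (Fin 2) ℂ)

lemma rotZ_mem_specialUnitaryGroup (θ : ℝ) : rotZ θ ∈ specialUnitaryGroup (Fin 2) ℂ := by
  rw [rotZ, of_mem_specialUnitaryGroup_fin_two_iff, ← ofReal_neg, star_exp_ofReal_mul_I,
    ofReal_neg, neg_neg]
  refine ⟨rfl, by simp, ?_⟩
  rw [← exp_add]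
  simp

lemma rotY_mem_specialUnitaryGroup (θ : ℝ) : rotY θ ∈ specialUnitaryGroup (Fin 2) ℂ := by
  rw [rotY, of_mem_specialUnitaryGroup_fin_two_iff]
  simp only [star_def, conj_ofReal, true_and]
  exact_mod_cast by simpa [sq] using Real.cos_sq_add_sin_sq (θ / 2)

@[simp] lemma rotZ_zero : rotZ 0 = 1 := by simp [rotZ, one_fin_two]

@[simp] lemma rotY_zero : rotY 0 = 1 := by simp [rotY, one_fin_two]

lemma rotZ_mul_rotZ (α β : ℝ) : rotZ α * rotZ β = rotZ (α + β) := by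
  simp only [rotZ, mul_fin_two, ← exp_add]
  push_cast
  ring_nf

lemma rotY_mul_rotY (α β : ℝ) : rotY α * rotY β = rotY (α + β) := by
  simp only [rotY, mul_fin_two, add_div, Real.cos_add, Real.sin_add]
  push_cast
  ring_nf

lemma rotZ_mul_pauliX (θ : ℝ) : rotZ θ * σₓ = σₓ * rotZ (-θ) := by
  simp [rotZ, neg_div]

lemma rotY_mul_pauliX (θ : ℝ) : rotY θ * σₓ = σₓ * rotY (-θ) := by
  simp [rotY, neg_div]

lemma pauliX_mul_pauliX : σₓ * σₓ = 1 := by simp [one_fin_two]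

lemma rotZ_mul_rotY_mul_rotZ_apply_zero_zero (a b c : ℝ) :
    (rotZ a * rotY b * rotZ c) 0 0 = Real.cos (b / 2) * exp (-((a + c) / 2 : ℝ) * I) := by
  simp only [rotZ, rotY, mul_fin_two, of_apply, cons_val', cons_val_zero,
    cons_val_fin_one, mul_zero, zero_mul, add_zero, zero_add]
  rw [mul_comm (cexp _), mul_assoc, ← exp_add]
  congr 2
  push_cast
  ring

lemma rotZ_mul_rotY_mul_rotZ_apply_one_zero (a b c : ℝ) :
    (rotZ a * rotY b * rotZ c) 1 0 = Real.sin (b / 2) * exp (((a - c) / 2 : ℝ) * I) := by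
  simp only [rotZ, rotY, mul_fin_two, of_apply, cons_val', cons_val_zero, cons_val_one,
    cons_val_fin_one, mul_zero, zero_mul, add_zero, zero_add]
  rw [mul_comm (cexp _), mul_assoc, ← exp_add]
  congr 2
  push_cast
  ring

lemma exists_rotZ_mul_rotY_mul_rotZ_eq {W : Matrix (Fin 2) (Fin 2) ℂ}
    (hW : W ∈ specialUnitaryGroup (Fin 2) ℂ) :
    ∃ a b c : ℝ, rotZ a * rotY b * rotZ c = W := by
  obtain ⟨-, -, hnorm⟩ := mem_specialUnitaryGroup_fin_two_iff.mp hW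
  set α := W 0 0
  set β := W 1 0
  have hnorm' : ‖α‖ ^ 2 + ‖β‖ ^ 2 = 1 := by
    simp only [star_def, conj_mul'] at hnorm
    exact_mod_cast hnorm
  have hcos : Real.cos (Real.arccos ‖α‖) = ‖α‖ :=
    Real.cos_arccos (by linarith [norm_nonneg α]) (by nlinarith [norm_nonneg α, norm_nonneg β])
  have hsin : Real.sin (Real.arccos ‖α‖) = ‖β‖ := by
    rw [Real.sin_arccos, ← hnorm', add_sub_cancel_left, Real.sqrt_sq (norm_nonneg β)]
  refine ⟨arg β - arg α, 2 * Real.arccos ‖α‖, -arg α - arg β,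
    specialUnitaryGroup_fin_two_ext (mul_mem (mul_mem (rotZ_mem_specialUnitaryGroup _)
      (rotY_mem_specialUnitaryGroup _)) (rotZ_mem_specialUnitaryGroup _)) hW ?_ ?_⟩
  · rw [rotZ_mul_rotY_mul_rotZ_apply_zero_zero, mul_div_cancel_left₀ _ two_ne_zero, hcos]
    convert norm_mul_exp_arg_mul_I α using 4
    push_cast
    ring
  · rw [rotZ_mul_rotY_mul_rotZ_apply_one_zero, mul_div_cancel_left₀ _ two_ne_zero, hsin]
    convert norm_mul_exp_arg_mul_I β using 4
    push_cast
    ring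

section Barenco

variable (a b c : ℝ)

lemma rotZ_mul_rotY_half_mul_mul_rotZ_eq_one :
    rotZ a * rotY (b / 2) * (rotY (-(b / 2)) * rotZ (-((a + c) / 2))) * rotZ ((c - a) / 2) = 1 :=
  calc _ = rotZ a * (rotY (b / 2) * rotY (-(b / 2))) *
          (rotZ (-((a + c) / 2)) * rotZ ((c - a) / 2)) := by
        simp only [mul_assoc]
    _ = rotZ a * rotZ (-a) := by
        rw [rotY_mul_rotY, add_neg_cancel, rotY_zero, mul_one, rotZ_mul_rotZ]
        congr 2
        ring
    _ = 1 := by rw [rotZ_mul_rotZ, add_neg_cancel, rotZ_zero]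

lemma rotZ_mul_rotY_half_mul_pauliX_mul_mul_pauliX_mul_rotZ :
    rotZ a * rotY (b / 2) * σₓ * (rotY (-(b / 2)) * rotZ (-((a + c) / 2))) * σₓ *
      rotZ ((c - a) / 2) = rotZ a * rotY b * rotZ c :=
  calc _ = rotZ a * rotY (b / 2) * (σₓ * rotY (-(b / 2))) * (rotZ (-((a + c) / 2)) * σₓ) *
          rotZ ((c - a) / 2) := by
        simp only [mul_assoc]
    _ = rotZ a * rotY (b / 2) * (rotY (b / 2) * σₓ) * (σₓ * rotZ ((a + c) / 2)) *
          rotZ ((c - a) / 2) := by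
        rw [← rotY_mul_pauliX, rotZ_mul_pauliX, neg_neg]
    _ = rotZ a * (rotY (b / 2) * rotY (b / 2)) * (σₓ * σₓ) *
          (rotZ ((a + c) / 2) * rotZ ((c - a) / 2)) := by
        simp only [mul_assoc]
    _ = rotZ a * rotY b * rotZ c := by
        rw [rotY_mul_rotY, add_halves, pauliX_mul_pauliX, mul_one, rotZ_mul_rotZ]
        congr 2
        ring

end Barenco

theorem barenco_abc_decomposition (W : Matrix (Fin 2) (Fin 2) ℂ)
    (hW : W ∈ Matrix.unitaryGroup (Fin 2) ℂ) (hdet : W.det = 1) :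
    ∃ A B C : Matrix (Fin 2) (Fin 2) ℂ,
      A ∈ Matrix.unitaryGroup (Fin 2) ℂ ∧ A.det = 1 ∧
      B ∈ Matrix.unitaryGroup (Fin 2) ℂ ∧ B.det = 1 ∧
      C ∈ Matrix.unitaryGroup (Fin 2) ℂ ∧ C.det = 1 ∧
      A * B * C = 1 ∧
      W = A * !![0, 1; 1, 0] * B * !![0, 1; 1, 0] * C := by
  obtain ⟨a, b, c, rfl⟩ := exists_rotZ_mul_rotY_mul_rotZ_eq ⟨hW, hdet⟩
  have hA : rotZ a * rotY (b / 2) ∈ specialUnitaryGroup (Fin 2) ℂ :=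
    mul_mem (rotZ_mem_specialUnitaryGroup _) (rotY_mem_specialUnitaryGroup _)
  have hB : rotY (-(b / 2)) * rotZ (-((a + c) / 2)) ∈ specialUnitaryGroup (Fin 2) ℂ :=
    mul_mem (rotY_mem_specialUnitaryGroup _) (rotZ_mem_specialUnitaryGroup _)
  have hC := rotZ_mem_specialUnitaryGroup ((c - a) / 2)
  exact ⟨_, _, _, hA.1, hA.2, hB.1, hB.2, hC.1, hC.2,
    rotZ_mul_rotY_half_mul_mul_rotZ_eq_one a b c,
    (rotZ_mul_rotY_half_mul_pauliX_mul_mul_pauliX_mul_rotZ a b c).symm⟩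
end
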